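/- arXiv:2509.02102 — 3 statements merged into one kernel-verified Lean document; each statement's English description precedes it below -/
import Mathlib

section
/- For the Buck converter power stage transfer matrix, the determinant-like quantity Δ_P := P11·P22 − P21·P12 equals P11, independently of the component values. -/
/-- Δ_P := P11·P22 − P21·P12 equals P11 for the Buck converter power stage,
independently of the component values. -/
theorem buck_deltaP_eq_P11 (RL Rc Ri Cc Ll : ℝ)
    (hRL : 0 < RL) (hRc : 0 < Rc) (hRi : 0 < Ri) (hC : 0 < Cc) (hL : 0 < Ll) :
    let s : RatFunc ℝ := RatFunc.X
    let c : ℝ → RatFunc ℝ := fun x => algebraMap ℝ (RatFunc ℝ) x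
    let D : RatFunc ℝ :=
      c (Cc * Ll * (RL + Rc)) * s ^ 2
        + c (Ll + Cc * RL * (Rc + Ri) + Cc * Rc * Ri) * s + c (RL + Ri)
    let P11 : RatFunc ℝ := c RL * (1 + c (Cc * Rc) * s) / D
    let P22 : RatFunc ℝ := P11
    let P12 : RatFunc ℝ :=
      c RL * (-(c (Cc * Ll * Rc)) * s ^ 2 - c (Ll + Cc * Rc * Ri) * s - c Ri) / D
    let P21 : RatFunc ℝ := (c (Cc * (RL + Rc)) * s + 1) / D
    P11 * P22 - P21 * P12 = P11 := by
  have hp : (Polynomial.C (Cc * Ll * (RL + Rc)) * Polynomial.X ^ 2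
      + Polynomial.C (Ll + Cc * RL * (Rc + Ri) + Cc * Rc * Ri) * Polynomial.X
      + Polynomial.C (RL + Ri) : Polynomial ℝ) ≠ 0 := by
    intro h
    have := congrArg (fun q => Polynomial.coeff q 0) h
    simp at this
    nlinarith
  have hD : (algebraMap ℝ (RatFunc ℝ) (Cc * Ll * (RL + Rc)) * RatFunc.X ^ 2
      + algebraMap ℝ (RatFunc ℝ) (Ll + Cc * RL * (Rc + Ri) + Cc * Rc * Ri) * RatFunc.X
      + algebraMap ℝ (RatFunc ℝ) (RL + Ri)) ≠ 0 := by
    have : (algebraMap ℝ (RatFunc ℝ) (Cc * Ll * (RL + Rc)) * RatFunc.X ^ 2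
        + algebraMap ℝ (RatFunc ℝ) (Ll + Cc * RL * (Rc + Ri) + Cc * Rc * Ri) * RatFunc.X
        + algebraMap ℝ (RatFunc ℝ) (RL + Ri))
        = algebraMap (Polynomial ℝ) (RatFunc ℝ)
          (Polynomial.C (Cc * Ll * (RL + Rc)) * Polynomial.X ^ 2
            + Polynomial.C (Ll + Cc * RL * (Rc + Ri) + Cc * Rc * Ri) * Polynomial.X
            + Polynomial.C (RL + Ri)) := by
      simp [RatFunc.algebraMap_eq_C, RatFunc.algebraMap_C, map_add, map_mul, map_pow]
    rw [this]
    exact RatFunc.algebraMap_ne_zero hp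
  simp only []
  rw [div_mul_div_comm, div_mul_div_comm, div_sub_div_same, div_eq_div_iff (mul_ne_zero hD hD) hD]
  simp only [map_add, map_mul]
  ring
end

section
/- Closing the LEC inner loop around the Buck power stage yields the closed-loop relation v_o = k_FF·P11·v_c + P12·(s/(s+p_H))·ĩ_out: the command-to-output transfer function is unchanged and the disturbance-to-output transfer function is multiplied by the high-pass factor s/(s+p_H). -/
/-!
Write `H = 1 + s/p_H`. Since `P₂₂ = P₁₁` and `det P = P₁₁² - P₁₂P₂₁ = P₁₁` (which is the identity
`N + (sL + R_i')·Q = D` between the numerators `N` of `P₁₁`, `Q` of `P₂₁` and the denominator `D`),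
the estimate `-G₁·v_o + i_L` reconstructs the load current `ĩ_out` exactly, whatever `v_SW` is.
The injected voltage is then `-G₂/(k_FF·H)·ĩ_out`, which cancels the fraction `1/H` of the
disturbance path `P₁₂·ĩ_out`, leaving `P₁₂·(1 - 1/H) = P₁₂·s/(s + p_H)`.
-/

section LoopAlgebra

variable {K : Type*} [Field K] {P₁₁ P₁₂ P₂₁ M k H vc iout vo iL vSW vinj : K}

theorem lec_estimate_eq (hP₁₁ : P₁₁ ≠ 0) (hdet : P₁₁ * P₁₁ - P₁₂ * P₂₁ = P₁₁)
    (hvo : vo = P₁₁ * vSW + P₁₂ * iout) (hiL : iL = P₂₁ * vSW + P₁₁ * iout) :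
    -(P₂₁ / P₁₁) * vo + iL = iout := by
  subst hvo hiL
  field_simp
  linear_combination iout * hdet

theorem lec_output_eq (hP₁₂ : P₁₂ = P₁₁ * M) (hdet : P₁₁ * P₁₁ - P₁₂ * P₂₁ = P₁₁) (hk : k ≠ 0)
    (hvo : vo = P₁₁ * vSW + P₁₂ * iout) (hiL : iL = P₂₁ * vSW + P₁₁ * iout)
    (hvSW : vSW = k * (vc + vinj))
    (hvinj : vinj = -(P₁₂ / P₁₁) / (k * H) * (-(P₂₁ / P₁₁) * vo + iL)) :
    vo = P₁₁ * k * vc + P₁₂ * (1 - H⁻¹) * iout := by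
  rcases eq_or_ne P₁₁ 0 with hP₁₁ | hP₁₁
  · simp [hvo, hP₁₂, hP₁₁]
  rw [lec_estimate_eq hP₁₁ hdet hvo hiL] at hvinj
  rw [hvo, hvSW, hvinj]
  field_simp
  ring

end LoopAlgebra

theorem det_eq_of_add_mul_eq {K : Type*} [Field K] {N M Q D : K} (hD : N + M * Q = D) :
    N / D * (N / D) - -(N * M) / D * (Q / D) = N / D := by
  have hfactor : N / D * (N / D) - -(N * M) / D * (Q / D) = N / D * ((N + M * Q) / D) := by ring
  rw [hfactor, hD]
  rcases eq_or_ne D 0 with rfl | hD₀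
  · simp
  · rw [div_self hD₀, mul_one]

theorem one_sub_inv_one_add_div {K : Type*} [Field K] {s p : K} (hp : p ≠ 0) (hsp : s + p ≠ 0) :
    1 - (1 + s / p)⁻¹ = s / (s + p) := by
  have hps : p + s ≠ 0 := by rwa [add_comm]
  field_simp
  ring

theorem RatFunc.X_add_algebraMap_ne_zero {K : Type*} [Field K] (a : K) :
    (RatFunc.X : RatFunc K) + algebraMap K (RatFunc K) a ≠ 0 := by
  rw [← RatFunc.algebraMap_X, IsScalarTower.algebraMap_apply K (Polynomial K) (RatFunc K),
    Polynomial.algebraMap_eq, ← map_add]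
  exact RatFunc.algebraMap_ne_zero (Polynomial.X_add_C_ne_zero a)

theorem lec_inner_loop_io_general (RL Rc Ri Cc Ll kFF pH : ℝ)
    (hk : 0 < kFF) (hp : 0 < pH)
    (vc iout vo iL vSW vinj : RatFunc ℝ) :
    let s : RatFunc ℝ := RatFunc.X
    let c : ℝ → RatFunc ℝ := fun x => algebraMap ℝ (RatFunc ℝ) x
    let D : RatFunc ℝ :=
      c (Cc * Ll * (RL + Rc)) * s ^ 2
        + c (Ll + Cc * RL * (Rc + Ri) + Cc * Rc * Ri) * s + c (RL + Ri)
    let P11 : RatFunc ℝ := c RL * (1 + c (Cc * Rc) * s) / D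
    let P22 : RatFunc ℝ := P11
    let P12 : RatFunc ℝ := -(c RL * (1 + c (Cc * Rc) * s) * (s * c Ll + c Ri)) / D
    let P21 : RatFunc ℝ := (c (Cc * (RL + Rc)) * s + 1) / D
    let G1 : RatFunc ℝ := P21 / P11
    let G2 : RatFunc ℝ := P12 / P11
    vo = P11 * vSW + P12 * iout →
    iL = P21 * vSW + P22 * iout →
    vSW = c kFF * (vc + vinj) →
    vinj = (-G2 / (c kFF * (1 + s / c pH))) * (-G1 * vo + iL) →
    vo = P11 * c kFF * vc + P12 * (s / (s + c pH)) * iout := by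
  intro s c D P11 P22 P12 P21 G1 G2 hvo hiL hvSW hvinj
  have hD : c RL * (1 + c (Cc * Rc) * s) + (s * c Ll + c Ri) * (c (Cc * (RL + Rc)) * s + 1) = D := by
    simp only [D, c, map_mul, map_add]
    ring
  have hk' : c kFF ≠ 0 := by simpa [c] using hk.ne'
  have hp' : c pH ≠ 0 := by simpa [c] using hp.ne'
  rw [← one_sub_inv_one_add_div hp' (RatFunc.X_add_algebraMap_ne_zero pH)]
  exact lec_output_eq (M := -(s * c Ll + c Ri)) (by ring) (det_eq_of_add_mul_eq hD) hk'
    hvo hiL hvSW hvinj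

/-- Closing the LEC inner loop around the Buck power stage yields
v_o = k_FF·P11·v_c + P12·(s/(s+p_H))·ĩ_out: the command-to-output transfer
function is unchanged and the disturbance transfer function is multiplied
by the high-pass factor s/(s+p_H). -/
theorem lec_inner_loop_io (RL Rc Ri Cc Ll kFF pH : ℝ)
    (hRL : 0 < RL) (hRc : 0 < Rc) (hRi : 0 < Ri) (hC : 0 < Cc) (hL : 0 < Ll)
    (hk : 0 < kFF) (hp : 0 < pH)
    (vc iout vo iL vSW vinj : RatFunc ℝ) :
    let s : RatFunc ℝ := RatFunc.X
    let c : ℝ → RatFunc ℝ := fun x => algebraMap ℝ (RatFunc ℝ) x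
    let D : RatFunc ℝ :=
      c (Cc * Ll * (RL + Rc)) * s ^ 2
        + c (Ll + Cc * RL * (Rc + Ri) + Cc * Rc * Ri) * s + c (RL + Ri)
    let P11 : RatFunc ℝ := c RL * (1 + c (Cc * Rc) * s) / D
    let P22 : RatFunc ℝ := P11
    let P12 : RatFunc ℝ := -(c RL * (1 + c (Cc * Rc) * s) * (s * c Ll + c Ri)) / D
    let P21 : RatFunc ℝ := (c (Cc * (RL + Rc)) * s + 1) / D
    let G1 : RatFunc ℝ := P21 / P11
    let G2 : RatFunc ℝ := P12 / P11
    vo = P11 * vSW + P12 * iout →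
    iL = P21 * vSW + P22 * iout →
    vSW = c kFF * (vc + vinj) →
    vinj = (-G2 / (c kFF * (1 + s / c pH))) * (-G1 * vo + iL) →
    vo = P11 * c kFF * vc + P12 * (s / (s + c pH)) * iout :=
  lec_inner_loop_io_general RL Rc Ri Cc Ll kFF pH hk hp vc iout vo iL vSW vinj
end

section
/- The LEC estimator recovers the disturbance exactly: if v_o = P11·v_SW + P12·ĩ_out and i_L = P21·v_SW + P22·ĩ_out, then the estimate î_out := −G1·v_o + i_L with G1 = P21/P11 satisfies î_out = ĩ_out. -/
/-!
Write `P12 = -P11 * Z` with `Z = sL + R_i'` the series impedance of the inductor. Since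
`P21 * Z + P11 = 1` (the numerators add up to the denominator `D`), the estimate is
`-(P21/P11)(P11 v + P12 i) + P21 v + P11 i = (P21 Z + P11) i = i`.
-/

open Polynomial

theorem disturbance_estimate_eq {K : Type*} [Field K] {P11 P21 Z v i : K} (h11 : P11 ≠ 0)
    (hsum : P21 * Z + P11 = 1) :
    -(P21 / P11) * (P11 * v + -(P11 * Z) * i) + (P21 * v + P11 * i) = i := by
  have hG : P21 / P11 * P11 = P21 := div_mul_cancel₀ P21 h11
  linear_combination (Z * i - v) * hG + i * hsum

namespace RatFunc

variable {K : Type*} [Field K]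

theorem algebraMap_ne_zero_of_coeff_zero_ne_zero {p : K[X]} (h : p.coeff 0 ≠ 0) :
    algebraMap K[X] (RatFunc K) p ≠ 0 :=
  algebraMap_ne_zero fun hp => h (by simp [hp])

theorem quadratic_ne_zero_of_const_ne_zero (a b e : K) (he : e ≠ 0) :
    algebraMap K (RatFunc K) a * X ^ 2 + algebraMap K (RatFunc K) b * X
      + algebraMap K (RatFunc K) e ≠ 0 := by
  have h := algebraMap_ne_zero_of_coeff_zero_ne_zero
    (p := Polynomial.C a * Polynomial.X ^ 2 + Polynomial.C b * Polynomial.X + Polynomial.C e)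
    (by simpa using he)
  simpa [algebraMap_X, IsScalarTower.algebraMap_apply K K[X] (RatFunc K)] using h

theorem one_add_mul_X_ne_zero (b : K) : (1 : RatFunc K) + algebraMap K (RatFunc K) b * X ≠ 0 := by
  have h := algebraMap_ne_zero_of_coeff_zero_ne_zero
    (p := 1 + Polynomial.C b * Polynomial.X) (by simp)
  simpa [algebraMap_X, IsScalarTower.algebraMap_apply K K[X] (RatFunc K)] using h

end RatFunc

theorem lec_estimator_exact_general (RL Rc Ri Cc Ll : ℝ)
    (hRL : 0 < RL) (hRi : 0 < Ri)
    (vSW iout vo iL : RatFunc ℝ) :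
    let s : RatFunc ℝ := RatFunc.X
    let c : ℝ → RatFunc ℝ := fun x => algebraMap ℝ (RatFunc ℝ) x
    let D : RatFunc ℝ :=
      c (Cc * Ll * (RL + Rc)) * s ^ 2
        + c (Ll + Cc * RL * (Rc + Ri) + Cc * Rc * Ri) * s + c (RL + Ri)
    let P11 : RatFunc ℝ := c RL * (1 + c (Cc * Rc) * s) / D
    let P22 : RatFunc ℝ := P11
    let P12 : RatFunc ℝ := -(c RL * (1 + c (Cc * Rc) * s) * (s * c Ll + c Ri)) / D
    let P21 : RatFunc ℝ := (c (Cc * (RL + Rc)) * s + 1) / D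
    let G1 : RatFunc ℝ := P21 / P11
    vo = P11 * vSW + P12 * iout →
    iL = P21 * vSW + P22 * iout →
    -G1 * vo + iL = iout := by
  intro s c D P11 P22 P12 P21 G1 hvo hiL
  have hD : D ≠ 0 := RatFunc.quadratic_ne_zero_of_const_ne_zero _ _ _ (by positivity)
  have hP11 : P11 ≠ 0 :=
    div_ne_zero (mul_ne_zero (by simpa [c] using hRL.ne') (RatFunc.one_add_mul_X_ne_zero _)) hD
  have hP12 : P12 = -(P11 * (s * c Ll + c Ri)) := by
    simp only [P12, P11]
    ring
  have hsum : P21 * (s * c Ll + c Ri) + P11 = 1 := by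
    rw [div_mul_eq_mul_div, ← add_div, div_eq_one_iff_eq hD]
    simp only [D, c, map_mul, map_add]
    ring
  rw [hvo, hiL, hP12]
  exact disturbance_estimate_eq hP11 hsum

/-- The LEC estimator recovers the disturbance exactly: if
v_o = P11·v_SW + P12·ĩ_out and i_L = P21·v_SW + P22·ĩ_out, then
î_out := −G1·v_o + i_L with G1 = P21/P11 satisfies î_out = ĩ_out. -/
theorem lec_estimator_exact (RL Rc Ri Cc Ll : ℝ)
    (hRL : 0 < RL) (hRc : 0 < Rc) (hRi : 0 < Ri) (hC : 0 < Cc) (hL : 0 < Ll)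
    (vSW iout vo iL : RatFunc ℝ) :
    let s : RatFunc ℝ := RatFunc.X
    let c : ℝ → RatFunc ℝ := fun x => algebraMap ℝ (RatFunc ℝ) x
    let D : RatFunc ℝ :=
      c (Cc * Ll * (RL + Rc)) * s ^ 2
        + c (Ll + Cc * RL * (Rc + Ri) + Cc * Rc * Ri) * s + c (RL + Ri)
    let P11 : RatFunc ℝ := c RL * (1 + c (Cc * Rc) * s) / D
    let P22 : RatFunc ℝ := P11
    let P12 : RatFunc ℝ := -(c RL * (1 + c (Cc * Rc) * s) * (s * c Ll + c Ri)) / D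
    let P21 : RatFunc ℝ := (c (Cc * (RL + Rc)) * s + 1) / D
    let G1 : RatFunc ℝ := P21 / P11
    vo = P11 * vSW + P12 * iout →
    iL = P21 * vSW + P22 * iout →
    -G1 * vo + iL = iout :=
  lec_estimator_exact_general RL Rc Ri Cc Ll hRL hRi vSW iout vo iL
end
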